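/- arXiv:2303.15460 — 5 statements merged into one kernel-verified Lean document; each statement's English description precedes it below -/
import Mathlib

section
/- Let T > 0 and μ > 0. For every function u : ℝ → ℝ that is C¹ on [0,T] with u(0) = 0 and every function v : ℝ → ℝ that is C¹ on [0,T] with v(T) = 0, the bilinear form a(u,v) := −∫₀ᵀ u'(t)v'(t) dt + μ ∫₀ᵀ u(t)v(t) dt satisfies |a(u,v)| ≤ (1 + 4T²μ/π²) · (∫₀ᵀ u'(t)² dt)^{1/2} · (∫₀ᵀ v'(t)² dt)^{1/2}. -/
open Real Set intervalIntegral

/-- Cauchy–Schwarz for interval integrals of continuous functions. -/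
lemma cs_interval {a b : ℝ} (hab : a ≤ b) {f g : ℝ → ℝ}
    (hf : ContinuousOn f (Set.Icc a b)) (hg : ContinuousOn g (Set.Icc a b)) :
    |∫ t in a..b, f t * g t| ≤
      Real.sqrt (∫ t in a..b, f t ^ 2) * Real.sqrt (∫ t in a..b, g t ^ 2) := by
  have huIcc : Set.uIcc a b = Set.Icc a b := Set.uIcc_of_le hab
  have hif : IntervalIntegrable (fun t => f t ^ 2) MeasureTheory.volume a b := by
    apply ContinuousOn.intervalIntegrable; rw [huIcc]; exact hf.pow 2
  have hig : IntervalIntegrable (fun t => g t ^ 2) MeasureTheory.volume a b := by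
    apply ContinuousOn.intervalIntegrable; rw [huIcc]; exact hg.pow 2
  have hifg : IntervalIntegrable (fun t => f t * g t) MeasureTheory.volume a b := by
    apply ContinuousOn.intervalIntegrable; rw [huIcc]; exact hf.mul hg
  set A := ∫ t in a..b, f t ^ 2 with hA
  set B := ∫ t in a..b, f t * g t with hB
  set C := ∫ t in a..b, g t ^ 2 with hC
  have hA0 : 0 ≤ A := intervalIntegral.integral_nonneg hab (fun t _ => sq_nonneg _)
  have hC0 : 0 ≤ C := intervalIntegral.integral_nonneg hab (fun t _ => sq_nonneg _)
  have key : B ^ 2 ≤ A * C := by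
    have hd : discrim A (2 * B) C ≤ 0 := by
      apply discrim_le_zero
      intro x
      have hexp : A * x ^ 2 + 2 * B * x + C
          = ∫ t in a..b, (x * f t + g t) ^ 2 := by
        have : (fun t => (x * f t + g t) ^ 2)
            = fun t => x ^ 2 * f t ^ 2 + 2 * x * (f t * g t) + g t ^ 2 := by
          funext t; ring
        rw [this, intervalIntegral.integral_add ((hif.const_mul _).add (hifg.const_mul _)) hig,
          intervalIntegral.integral_add (hif.const_mul _) (hifg.const_mul _),
          intervalIntegral.integral_const_mul, intervalIntegral.integral_const_mul]
        ring
      have h0 : 0 ≤ A * x ^ 2 + 2 * B * x + C := by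
        rw [hexp]
        exact intervalIntegral.integral_nonneg hab (fun t _ => sq_nonneg _)
      nlinarith [h0]
    rw [discrim] at hd
    nlinarith
  calc |B| = Real.sqrt (B ^ 2) := by rw [Real.sqrt_sq_eq_abs]
    _ ≤ Real.sqrt (A * C) := Real.sqrt_le_sqrt key
    _ = Real.sqrt A * Real.sqrt C := Real.sqrt_mul hA0 _

lemma semicircle (T : ℝ) (hT : 0 < T) :
    ∫ t in (0:ℝ)..T, Real.sqrt t * Real.sqrt (T - t) = π * T ^ 2 / 8 := by
  have hc : (T / 2 : ℝ) ≠ 0 := by positivity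
  have h := intervalIntegral.integral_comp_mul_add
    (a := (-1:ℝ)) (b := 1) (f := fun y => Real.sqrt y * Real.sqrt (T - y)) hc (T/2)
  have h1 : (T/2) * (-1) + T/2 = (0:ℝ) := by ring
  have h2 : (T/2) * 1 + T/2 = T := by ring
  rw [h1, h2] at h
  have h3 : (∫ x in (-1:ℝ)..1, Real.sqrt (T/2 * x + T/2) * Real.sqrt (T - (T/2 * x + T/2)))
      = ∫ x in (-1:ℝ)..1, (T/2) * Real.sqrt (1 - x^2) := by
    apply intervalIntegral.integral_congr
    intro x hx
    rw [Set.uIcc_of_le (by norm_num : (-1:ℝ) ≤ 1)] at hx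
    show Real.sqrt (T/2 * x + T/2) * Real.sqrt (T - (T/2 * x + T/2)) = (T/2) * Real.sqrt (1 - x^2)
    have hx1 : (0:ℝ) ≤ T/2 * x + T/2 := by nlinarith [hx.1, hx.2]
    have : Real.sqrt (T/2 * x + T/2) * Real.sqrt (T - (T/2 * x + T/2))
        = Real.sqrt ((T/2 * x + T/2) * (T - (T/2 * x + T/2))) :=
      (Real.sqrt_mul hx1 _).symm
    rw [this]
    have : (T/2 * x + T/2) * (T - (T/2 * x + T/2)) = (T/2)^2 * (1 - x^2) := by ring
    rw [this, Real.sqrt_mul (sq_nonneg _), Real.sqrt_sq (by positivity : (0:ℝ) ≤ T/2)]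
  rw [h3, intervalIntegral.integral_const_mul, integral_sqrt_one_sub_sq] at h
  have := h.symm
  rw [smul_eq_mul] at this
  field_simp at this ⊢
  linarith [this]

/-- Continuity of the bilinear form `a(u,v) = -∫ u'v' + μ∫ uv` with explicit
constant `1 + 4T²μ/π²` with respect to the `H¹(0,T)` seminorms. -/
theorem bilinear_form_bounded (T μ : ℝ) (hT : 0 < T) (hμ : 0 < μ)
    (u u' v v' : ℝ → ℝ)
    (hu : ∀ t ∈ Set.Icc (0:ℝ) T, HasDerivAt u (u' t) t)
    (hu' : ContinuousOn u' (Set.Icc (0:ℝ) T))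
    (hu0 : u 0 = 0)
    (hv : ∀ t ∈ Set.Icc (0:ℝ) T, HasDerivAt v (v' t) t)
    (hv' : ContinuousOn v' (Set.Icc (0:ℝ) T))
    (hvT : v T = 0) :
    |(-∫ t in (0:ℝ)..T, u' t * v' t) + μ * ∫ t in (0:ℝ)..T, u t * v t| ≤
      (1 + 4 * T ^ 2 * μ / Real.pi ^ 2) *
        Real.sqrt (∫ t in (0:ℝ)..T, (u' t) ^ 2) *
        Real.sqrt (∫ t in (0:ℝ)..T, (v' t) ^ 2) := by
  set A := Real.sqrt (∫ t in (0:ℝ)..T, (u' t) ^ 2) with hAdef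
  set B := Real.sqrt (∫ t in (0:ℝ)..T, (v' t) ^ 2) with hBdef
  have hA0 : 0 ≤ A := Real.sqrt_nonneg _
  have hB0 : 0 ≤ B := Real.sqrt_nonneg _
  have huIcc : Set.uIcc (0:ℝ) T = Set.Icc 0 T := Set.uIcc_of_le hT.le
  have hifu : IntervalIntegrable (fun t => u' t ^ 2) MeasureTheory.volume 0 T := by
    apply ContinuousOn.intervalIntegrable; rw [huIcc]; exact hu'.pow 2
  have hifv : IntervalIntegrable (fun t => v' t ^ 2) MeasureTheory.volume 0 T := by
    apply ContinuousOn.intervalIntegrable; rw [huIcc]; exact hv'.pow 2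
  -- step 1 : Cauchy-Schwarz for the derivative term
  have h1 : |∫ t in (0:ℝ)..T, u' t * v' t| ≤ A * B := cs_interval hT.le hu' hv'
  -- pointwise bound for u
  have hub : ∀ t ∈ Set.Icc (0:ℝ) T, |u t| ≤ Real.sqrt t * A := by
    intro t ht
    have hsub : Set.uIcc (0:ℝ) t ⊆ Set.Icc 0 T := by
      rw [Set.uIcc_of_le ht.1]; exact Set.Icc_subset_Icc le_rfl ht.2
    have hInt : IntervalIntegrable u' MeasureTheory.volume 0 t :=
      (hu'.mono hsub).intervalIntegrable
    have hft := intervalIntegral.integral_eq_sub_of_hasDerivAt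
      (fun s hs => hu s (hsub hs)) hInt
    have hut : u t = ∫ s in (0:ℝ)..t, u' s := by rw [hft, hu0, sub_zero]
    have hcs := cs_interval (f := u') (g := fun _ => (1:ℝ)) ht.1
      (hu'.mono (Set.Icc_subset_Icc le_rfl ht.2)) continuousOn_const
    have hone : (∫ s in (0:ℝ)..t, ((fun _ => (1:ℝ)) s) ^ 2) = t := by simp
    have hmono : (∫ s in (0:ℝ)..t, u' s ^ 2) ≤ ∫ s in (0:ℝ)..T, u' s ^ 2 :=
      intervalIntegral.integral_mono_interval le_rfl ht.1 ht.2
        (MeasureTheory.ae_of_all _ (fun s => sq_nonneg _)) hifu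
    have hs : Real.sqrt (∫ s in (0:ℝ)..t, u' s ^ 2) ≤ A := Real.sqrt_le_sqrt hmono
    calc |u t| = |∫ s in (0:ℝ)..t, u' s * 1| := by rw [hut]; simp
      _ ≤ Real.sqrt (∫ s in (0:ℝ)..t, u' s ^ 2) * Real.sqrt t := by
          simpa [hone] using hcs
      _ ≤ A * Real.sqrt t :=
          mul_le_mul_of_nonneg_right hs (Real.sqrt_nonneg _)
      _ = Real.sqrt t * A := mul_comm _ _
  -- pointwise bound for v
  have hvb : ∀ t ∈ Set.Icc (0:ℝ) T, |v t| ≤ Real.sqrt (T - t) * B := by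
    intro t ht
    have hsub : Set.uIcc t T ⊆ Set.Icc 0 T := by
      rw [Set.uIcc_of_le ht.2]; exact Set.Icc_subset_Icc ht.1 le_rfl
    have hInt : IntervalIntegrable v' MeasureTheory.volume t T :=
      (hv'.mono hsub).intervalIntegrable
    have hft := intervalIntegral.integral_eq_sub_of_hasDerivAt
      (fun s hs => hv s (hsub hs)) hInt
    have hvt : v t = -∫ s in t..T, v' s := by rw [hft, hvT, zero_sub, neg_neg]
    have hcs := cs_interval (f := v') (g := fun _ => (1:ℝ)) ht.2
      (hv'.mono (Set.Icc_subset_Icc ht.1 le_rfl)) continuousOn_const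
    have hone : (∫ s in t..T, ((fun _ => (1:ℝ)) s) ^ 2) = T - t := by simp
    have hmono : (∫ s in t..T, v' s ^ 2) ≤ ∫ s in (0:ℝ)..T, v' s ^ 2 :=
      intervalIntegral.integral_mono_interval ht.1 ht.2 le_rfl
        (MeasureTheory.ae_of_all _ (fun s => sq_nonneg _)) hifv
    have hs : Real.sqrt (∫ s in t..T, v' s ^ 2) ≤ B := Real.sqrt_le_sqrt hmono
    calc |v t| = |∫ s in t..T, v' s * 1| := by rw [hvt]; simp
      _ ≤ Real.sqrt (∫ s in t..T, v' s ^ 2) * Real.sqrt (T - t) := by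
          simpa [hone] using hcs
      _ ≤ B * Real.sqrt (T - t) :=
          mul_le_mul_of_nonneg_right hs (Real.sqrt_nonneg _)
      _ = Real.sqrt (T - t) * B := mul_comm _ _
  -- continuity of u and v
  have hucont : ContinuousOn u (Set.Icc 0 T) :=
    fun t ht => (hu t ht).continuousAt.continuousWithinAt
  have hvcont : ContinuousOn v (Set.Icc 0 T) :=
    fun t ht => (hv t ht).continuousAt.continuousWithinAt
  -- step 2 : bound for the zero-order term
  have h2 : |∫ t in (0:ℝ)..T, u t * v t| ≤ π * T ^ 2 / 8 * (A * B) := by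
    have int1 : IntervalIntegrable (fun t => |u t * v t|) MeasureTheory.volume 0 T := by
      apply ContinuousOn.intervalIntegrable; rw [huIcc]; exact (hucont.mul hvcont).abs
    have int2 : IntervalIntegrable
        (fun t => Real.sqrt t * Real.sqrt (T - t) * (A * B)) MeasureTheory.volume 0 T :=
      (((Real.continuous_sqrt).mul
        (Real.continuous_sqrt.comp (continuous_const.sub continuous_id))).mul
        continuous_const).intervalIntegrable _ _
    calc |∫ t in (0:ℝ)..T, u t * v t|
        ≤ ∫ t in (0:ℝ)..T, |u t * v t| :=
          intervalIntegral.abs_integral_le_integral_abs hT.le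
      _ ≤ ∫ t in (0:ℝ)..T, Real.sqrt t * Real.sqrt (T - t) * (A * B) := by
          apply intervalIntegral.integral_mono_on hT.le int1 int2
          intro t ht
          rw [abs_mul]
          calc |u t| * |v t| ≤ (Real.sqrt t * A) * (Real.sqrt (T - t) * B) :=
                mul_le_mul (hub t ht) (hvb t ht) (abs_nonneg _)
                  (by positivity)
            _ = Real.sqrt t * Real.sqrt (T - t) * (A * B) := by ring
      _ = (∫ t in (0:ℝ)..T, Real.sqrt t * Real.sqrt (T - t)) * (A * B) := by
          rw [intervalIntegral.integral_mul_const]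
      _ = π * T ^ 2 / 8 * (A * B) := by rw [semicircle T hT]
  -- arithmetic
  have hπ : π < 3.15 := pi_lt_d2
  have hπ0 : 0 < π := pi_pos
  have h32 : π ^ 3 < 32 := by
    have : π ^ 3 < 3.15 ^ 3 := pow_lt_pow_left₀ hπ hπ0.le (by norm_num)
    nlinarith
  have hcoef : μ * (π * T ^ 2 / 8) ≤ 4 * T ^ 2 * μ / π ^ 2 := by
    rw [le_div_iff₀ (by positivity : (0:ℝ) < π ^ 2)]
    nlinarith [mul_pos hμ (pow_pos hT 2)]
  calc |(-∫ t in (0:ℝ)..T, u' t * v' t) + μ * ∫ t in (0:ℝ)..T, u t * v t|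
      ≤ |∫ t in (0:ℝ)..T, u' t * v' t| + μ * |∫ t in (0:ℝ)..T, u t * v t| := by
        have := abs_add_le (-∫ t in (0:ℝ)..T, u' t * v' t) (μ * ∫ t in (0:ℝ)..T, u t * v t)
        simpa [abs_neg, abs_mul, abs_of_pos hμ] using this
    _ ≤ A * B + μ * (π * T ^ 2 / 8 * (A * B)) :=
        add_le_add h1 (mul_le_mul_of_nonneg_left h2 hμ.le)
    _ ≤ (1 + 4 * T ^ 2 * μ / π ^ 2) * A * B := by
        nlinarith [mul_le_mul_of_nonneg_right hcoef (mul_nonneg hA0 hB0)]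
end

section
/- Let T > 0, μ > 0, and let f : ℝ → ℝ be continuous on [0,T]. Let u : ℝ → ℝ be twice continuously differentiable on [0,T] with u(0) = 0, u'(0) = 0 and u''(t) + μ u(t) = f(t) for all t ∈ [0,T]. If C ≥ 0 is a constant such that ∫₀ᵀ f(t)v(t) dt ≤ C · (∫₀ᵀ v'(t)² dt)^{1/2} for every function v that is C¹ on [0,T] with v(T) = 0, then (∫₀ᵀ u'(t)² dt)^{1/2} ≤ ((2 + √μ·T)/2) · C. -/
open Real Set intervalIntegral
open MeasureTheory

/-- Cauchy–Schwarz for interval integrals, squared form. -/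
lemma cs_sq_aux (a b : ℝ) (hab : a ≤ b) (p q : ℝ → ℝ)
    (hp : ContinuousOn p (Set.Icc a b)) (hq : ContinuousOn q (Set.Icc a b)) :
    (∫ t in a..b, p t * q t) ^ 2 ≤ (∫ t in a..b, p t ^ 2) * (∫ t in a..b, q t ^ 2) := by
  have huIcc : Set.uIcc a b = Set.Icc a b := uIcc_of_le hab
  have hint : ∀ {r : ℝ → ℝ}, ContinuousOn r (Set.Icc a b) → IntervalIntegrable r volume a b :=
    fun hr => ContinuousOn.intervalIntegrable (by rwa [huIcc])
  have i1 : IntervalIntegrable (fun t => p t ^ 2) volume a b := hint (hp.pow 2)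
  have i2 : IntervalIntegrable (fun t => p t * q t) volume a b := hint (hp.mul hq)
  have i3 : IntervalIntegrable (fun t => q t ^ 2) volume a b := hint (hq.pow 2)
  set P := ∫ t in a..b, p t ^ 2 with hP
  set Q := ∫ t in a..b, q t ^ 2 with hQ
  set S := ∫ t in a..b, p t * q t with hS
  have hP0 : 0 ≤ P := intervalIntegral.integral_nonneg hab fun t _ => sq_nonneg _
  have hQ0 : 0 ≤ Q := intervalIntegral.integral_nonneg hab fun t _ => sq_nonneg _
  have key : ∀ lam : ℝ, 0 ≤ lam ^ 2 * P - 2 * lam * S + Q := by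
    intro lam
    have h0 : 0 ≤ ∫ t in a..b, (lam * p t - q t) ^ 2 :=
      intervalIntegral.integral_nonneg hab fun t _ => sq_nonneg _
    have hexp : (∫ t in a..b, (lam * p t - q t) ^ 2)
        = lam ^ 2 * P - 2 * lam * S + Q := by
      have heq : ∀ t : ℝ, (lam * p t - q t) ^ 2
          = lam ^ 2 * p t ^ 2 - 2 * lam * (p t * q t) + q t ^ 2 := by intro t; ring
      simp_rw [heq]
      rw [intervalIntegral.integral_add ((i1.const_mul _).sub (i2.const_mul _)) i3,
        intervalIntegral.integral_sub (i1.const_mul _) (i2.const_mul _),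
        intervalIntegral.integral_const_mul, intervalIntegral.integral_const_mul]
    linarith [hexp ▸ h0]
  rcases eq_or_lt_of_le hP0 with hP0' | hPpos
  · rw [← hP0', zero_mul]
    have hS0 : S = 0 := by
      by_contra hne
      have hc : 2 * ((Q + 1) / (2 * S)) * S = Q + 1 := by field_simp
      have h1 := key ((Q + 1) / (2 * S))
      rw [← hP0', mul_zero] at h1
      linarith
    simp [hS0]
  · have hP' : P ≠ 0 := ne_of_gt hPpos
    have hd : S / P * P = S := div_mul_cancel₀ S hP'
    have h4 : (S / P) ^ 2 * P = S / P * S := by rw [pow_two, mul_assoc, hd]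
    have h3 : S / P * S ≤ Q := by linarith [key (S / P)]
    have h5 : S / P * S * P = S ^ 2 := by rw [mul_right_comm, hd, ← pow_two]
    calc S ^ 2 = S / P * S * P := h5.symm
    _ ≤ Q * P := mul_le_mul_of_nonneg_right h3 hPpos.le
    _ = P * Q := mul_comm _ _

lemma cs_aux (a b : ℝ) (hab : a ≤ b) (p q : ℝ → ℝ)
    (hp : ContinuousOn p (Set.Icc a b)) (hq : ContinuousOn q (Set.Icc a b)) :
    (∫ t in a..b, p t * q t)
      ≤ Real.sqrt (∫ t in a..b, p t ^ 2) * Real.sqrt (∫ t in a..b, q t ^ 2) := by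
  have h := cs_sq_aux a b hab p q hp hq
  have hP0 : 0 ≤ ∫ t in a..b, p t ^ 2 :=
    intervalIntegral.integral_nonneg hab fun t _ => sq_nonneg _
  calc (∫ t in a..b, p t * q t) ≤ |∫ t in a..b, p t * q t| := le_abs_self _
  _ = Real.sqrt ((∫ t in a..b, p t * q t) ^ 2) := (Real.sqrt_sq_eq_abs _).symm
  _ ≤ Real.sqrt ((∫ t in a..b, p t ^ 2) * (∫ t in a..b, q t ^ 2)) := Real.sqrt_le_sqrt h
  _ = _ := Real.sqrt_mul hP0 _

lemma hasDerivAt_int_left (h : ℝ → ℝ) (hh : Continuous h) (T s : ℝ) :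
    HasDerivAt (fun s => ∫ t in s..T, h t) (-h s) s :=
  intervalIntegral.integral_hasDerivAt_left (hh.intervalIntegrable s T)
    (hh.stronglyMeasurableAtFilter _ _) hh.continuousAt

lemma w_hasDeriv (θ T : ℝ) (g : ℝ → ℝ) (hg : Continuous g) (s : ℝ) :
    HasDerivAt (fun s => Real.cos (θ * s) * (∫ t in s..T, Real.cos (θ * t) * g t)
        + Real.sin (θ * s) * (∫ t in s..T, Real.sin (θ * t) * g t))
      (θ * (Real.cos (θ * s) * (∫ t in s..T, Real.sin (θ * t) * g t)
        - Real.sin (θ * s) * (∫ t in s..T, Real.cos (θ * t) * g t)) - g s) s := by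
  have hid : HasDerivAt (fun y : ℝ => θ * y) θ s := by
    simpa using (hasDerivAt_id s).const_mul θ
  have hA := hasDerivAt_int_left (fun t => Real.cos (θ * t) * g t)
    ((Real.continuous_cos.comp (continuous_const.mul continuous_id)).mul hg) T s
  have hB := hasDerivAt_int_left (fun t => Real.sin (θ * t) * g t)
    ((Real.continuous_sin.comp (continuous_const.mul continuous_id)).mul hg) T s
  have h := (hid.cos.mul hA).add (hid.sin.mul hB)
  refine h.congr_deriv ?_
  linear_combination (-(g s)) * Real.sin_sq_add_cos_sq (θ * s)

lemma z_hasDeriv (θ T : ℝ) (g : ℝ → ℝ) (hg : Continuous g) (s : ℝ) :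
    HasDerivAt (fun s => Real.cos (θ * s) * (∫ t in s..T, Real.sin (θ * t) * g t)
        - Real.sin (θ * s) * (∫ t in s..T, Real.cos (θ * t) * g t))
      (-(θ * (Real.cos (θ * s) * (∫ t in s..T, Real.cos (θ * t) * g t)
        + Real.sin (θ * s) * (∫ t in s..T, Real.sin (θ * t) * g t)))) s := by
  have hid : HasDerivAt (fun y : ℝ => θ * y) θ s := by
    simpa using (hasDerivAt_id s).const_mul θ
  have hA := hasDerivAt_int_left (fun t => Real.cos (θ * t) * g t)
    ((Real.continuous_cos.comp (continuous_const.mul continuous_id)).mul hg) T s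
  have hB := hasDerivAt_int_left (fun t => Real.sin (θ * t) * g t)
    ((Real.continuous_sin.comp (continuous_const.mul continuous_id)).mul hg) T s
  have h := (hid.cos.mul hB).sub (hid.sin.mul hA)
  refine h.congr_deriv ?_
  ring

lemma K_eval (θ : ℝ) (hθ : 0 < θ) (s T : ℝ) :
    (∫ t in s..T, Real.sin (θ * (t - s)) ^ 2)
      = (T - s) / 2 - Real.sin (2 * θ * (T - s)) / (4 * θ) := by
  have hθ' : θ ≠ 0 := ne_of_gt hθ
  have hF : ∀ t : ℝ, HasDerivAt (fun t => t / 2 - Real.sin (2 * θ * (t - s)) / (4 * θ))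
      (Real.sin (θ * (t - s)) ^ 2) t := by
    intro t
    have h1 : HasDerivAt (fun t : ℝ => 2 * θ * (t - s)) (2 * θ) t := by
      simpa using ((hasDerivAt_id t).sub_const s).const_mul (2 * θ)
    have h3 := ((hasDerivAt_id t).div_const 2).sub (h1.sin.div_const (4 * θ))
    refine h3.congr_deriv ?_
    have hc2 : Real.cos (2 * θ * (t - s)) = 1 - 2 * Real.sin (θ * (t - s)) ^ 2 := by
      rw [show 2 * θ * (t - s) = 2 * (θ * (t - s)) by ring, Real.cos_two_mul]
      nlinarith [Real.sin_sq_add_cos_sq (θ * (t - s))]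
    rw [hc2]; field_simp; ring
  have hInt : IntervalIntegrable (fun t => Real.sin (θ * (t - s)) ^ 2) volume s T :=
    ((Real.continuous_sin.comp (continuous_const.mul (continuous_id.sub continuous_const))).pow 2).intervalIntegrable s T
  rw [intervalIntegral.integral_eq_sub_of_hasDerivAt (fun t _ => hF t) hInt]
  rw [sub_self, mul_zero, Real.sin_zero, zero_div]
  ring

lemma intK_eval (θ : ℝ) (hθ : 0 < θ) (T : ℝ) :
    (∫ s in (0:ℝ)..T, ((T - s) / 2 - Real.sin (2 * θ * (T - s)) / (4 * θ)))
      = T ^ 2 / 4 - (1 - Real.cos (2 * θ * T)) / (8 * θ ^ 2) := by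
  have hθ' : θ ≠ 0 := ne_of_gt hθ
  have hG : ∀ s : ℝ, HasDerivAt
      (fun s => T * s / 2 - s ^ 2 / 4 - Real.cos (2 * θ * (T - s)) / (8 * θ ^ 2))
      ((T - s) / 2 - Real.sin (2 * θ * (T - s)) / (4 * θ)) s := by
    intro s
    have h1 : HasDerivAt (fun s : ℝ => 2 * θ * (T - s)) (-(2 * θ)) s := by
      simpa using ((hasDerivAt_const s T).sub (hasDerivAt_id s)).const_mul (2 * θ)
    have h3 := ((((hasDerivAt_id s).const_mul T).div_const 2).sub
      ((hasDerivAt_pow 2 s).div_const 4)).sub (h1.cos.div_const (8 * θ ^ 2))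
    refine h3.congr_deriv ?_
    field_simp; ring
  have hInt : IntervalIntegrable
      (fun s => (T - s) / 2 - Real.sin (2 * θ * (T - s)) / (4 * θ)) volume 0 T := by
    apply Continuous.intervalIntegrable
    exact ((continuous_const.sub continuous_id).div_const 2).sub
      ((Real.continuous_sin.comp (continuous_const.mul (continuous_const.sub continuous_id))).div_const (4 * θ))
  rw [intervalIntegral.integral_eq_sub_of_hasDerivAt (fun s _ => hG s) hInt]
  rw [sub_self, mul_zero, Real.cos_zero]
  ring

/-- A priori stability estimate `|u|_{H¹(0,T)} ≤ ((2+√μT)/2)·‖f‖_{[H¹_{*,0}]'}`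
for classical solutions of `u'' + μu = f`, `u(0) = u'(0) = 0`. -/
theorem ode_stability_estimate (T μ : ℝ) (hT : 0 < T) (hμ : 0 < μ)
    (f : ℝ → ℝ) (hf : ContinuousOn f (Set.Icc (0:ℝ) T))
    (u u' u'' : ℝ → ℝ)
    (hu : ∀ t ∈ Set.Icc (0:ℝ) T, HasDerivAt u (u' t) t)
    (hu' : ∀ t ∈ Set.Icc (0:ℝ) T, HasDerivAt u' (u'' t) t)
    (hu'' : ContinuousOn u'' (Set.Icc (0:ℝ) T))
    (hu0 : u 0 = 0) (hu'0 : u' 0 = 0)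
    (hode : ∀ t ∈ Set.Icc (0:ℝ) T, u'' t + μ * u t = f t)
    (C : ℝ) (hC : 0 ≤ C)
    (hdual : ∀ v v' : ℝ → ℝ,
      (∀ t ∈ Set.Icc (0:ℝ) T, HasDerivAt v (v' t) t) →
      ContinuousOn v' (Set.Icc (0:ℝ) T) →
      v T = 0 →
      ∫ t in (0:ℝ)..T, f t * v t ≤ C * Real.sqrt (∫ t in (0:ℝ)..T, (v' t) ^ 2)) :
    Real.sqrt (∫ t in (0:ℝ)..T, (u' t) ^ 2) ≤ ((2 + Real.sqrt μ * T) / 2) * C := by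
  have hle : (0:ℝ) ≤ T := hT.le
  have huIcc : Set.uIcc (0:ℝ) T = Set.Icc 0 T := uIcc_of_le hle
  have hint : ∀ {r : ℝ → ℝ}, ContinuousOn r (Set.Icc 0 T) →
      IntervalIntegrable r volume 0 T :=
    fun hr => ContinuousOn.intervalIntegrable (by rwa [huIcc])
  set θ := Real.sqrt μ with hθdef
  have hθ : 0 < θ := Real.sqrt_pos.mpr hμ
  have hθsq : θ ^ 2 = μ := Real.sq_sqrt hμ.le
  have hucont : ContinuousOn u (Set.Icc 0 T) :=
    fun t ht => (hu t ht).continuousAt.continuousWithinAt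
  have hu'cont : ContinuousOn u' (Set.Icc 0 T) :=
    fun t ht => (hu' t ht).continuousAt.continuousWithinAt
  -- clamped version of u'
  have hclc : Continuous fun t : ℝ => max 0 (min t T) :=
    continuous_const.max (continuous_id.min continuous_const)
  set g : ℝ → ℝ := fun t => u' (max 0 (min t T)) with hgdef
  have hgcont : Continuous g :=
    hu'cont.comp_continuous hclc fun t => ⟨le_max_left _ _, max_le hle (min_le_right _ _)⟩
  have hgeq : ∀ t ∈ Set.Icc (0:ℝ) T, g t = u' t := by
    intro t ht
    rw [hgdef]
    simp only
    rw [min_eq_left ht.2, max_eq_right ht.1]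
  -- the test function and companions
  set A : ℝ → ℝ := fun s => ∫ t in s..T, Real.cos (θ * t) * g t with hAdef
  set B : ℝ → ℝ := fun s => ∫ t in s..T, Real.sin (θ * t) * g t with hBdef
  set w : ℝ → ℝ := fun s => Real.cos (θ * s) * A s + Real.sin (θ * s) * B s with hwdef
  set z : ℝ → ℝ := fun s => Real.cos (θ * s) * B s - Real.sin (θ * s) * A s with hzdef
  have hwd : ∀ s : ℝ, HasDerivAt w (θ * z s - g s) s := by
    intro s
    simp only [hwdef, hzdef, hAdef, hBdef]
    exact w_hasDeriv θ T g hgcont s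
  have hzd : ∀ s : ℝ, HasDerivAt z (-(θ * w s)) s := by
    intro s
    simp only [hwdef, hzdef, hAdef, hBdef]
    exact z_hasDeriv θ T g hgcont s
  have hwc : Continuous w := by
    have : Differentiable ℝ w := fun s => (hwd s).differentiableAt
    exact this.continuous
  have hzc : Continuous z := by
    have : Differentiable ℝ z := fun s => (hzd s).differentiableAt
    exact this.continuous
  have hwT : w T = 0 := by
    simp [hwdef, hAdef, hBdef, intervalIntegral.integral_same]
  have hzT : z T = 0 := by
    simp [hzdef, hAdef, hBdef, intervalIntegral.integral_same]
  set I := ∫ t in (0:ℝ)..T, (u' t) ^ 2 with hIdef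
  have hI0 : 0 ≤ I := intervalIntegral.integral_nonneg hle fun t _ => sq_nonneg _
  -- integrability facts
  have iw : IntervalIntegrable w volume 0 T := hint hwc.continuousOn
  have iz : IntervalIntegrable z volume 0 T := hint hzc.continuousOn
  have iu'w : IntervalIntegrable (fun t => u'' t * w t) volume 0 T :=
    hint (hu''.mul hwc.continuousOn)
  have iuw : IntervalIntegrable (fun t => u t * w t) volume 0 T :=
    hint (hucont.mul hwc.continuousOn)
  have iwd : IntervalIntegrable (fun t => θ * z t - g t) volume 0 T :=
    hint (((continuous_const.mul hzc).sub hgcont).continuousOn)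
  have izu' : IntervalIntegrable (fun t => z t * u' t) volume 0 T :=
    hint (hzc.continuousOn.mul hu'cont)
  have igu' : IntervalIntegrable (fun t => g t * u' t) volume 0 T :=
    hint (hgcont.continuousOn.mul hu'cont)
  have iu'z : IntervalIntegrable (fun t => u' t * z t) volume 0 T :=
    hint (hu'cont.mul hzc.continuousOn)
  -- Step 1: ∫ f w = ∫ (u'' + μ u) w
  have hfw : (∫ t in (0:ℝ)..T, f t * w t)
      = ∫ t in (0:ℝ)..T, (u'' t + μ * u t) * w t := by
    apply intervalIntegral.integral_congr
    intro t ht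
    rw [huIcc] at ht
    show f t * w t = (u'' t + μ * u t) * w t
    rw [hode t ht]
  -- Step 2: split
  have hsplit : (∫ t in (0:ℝ)..T, (u'' t + μ * u t) * w t)
      = (∫ t in (0:ℝ)..T, u'' t * w t) + μ * ∫ t in (0:ℝ)..T, u t * w t := by
    have heq : ∀ t : ℝ, (u'' t + μ * u t) * w t = u'' t * w t + μ * (u t * w t) :=
      fun t => by ring
    simp only [heq]
    rw [intervalIntegral.integral_add iu'w (iuw.const_mul μ),
      intervalIntegral.integral_const_mul]
  -- Step 3: integration by parts for ∫ u'' w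
  have hibp1 : (∫ t in (0:ℝ)..T, w t * u'' t)
      = w T * u' T - w 0 * u' 0 - ∫ t in (0:ℝ)..T, (θ * z t - g t) * u' t := by
    apply intervalIntegral.integral_mul_deriv_eq_deriv_mul
    · intro x hx; exact hwd x
    · intro x hx; rw [huIcc] at hx; exact hu' x hx
    · exact iwd
    · exact hint hu''
  have hcomm1 : (∫ t in (0:ℝ)..T, u'' t * w t) = ∫ t in (0:ℝ)..T, w t * u'' t :=
    intervalIntegral.integral_congr fun t _ => mul_comm _ _
  have hexp1 : (∫ t in (0:ℝ)..T, (θ * z t - g t) * u' t)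
      = θ * (∫ t in (0:ℝ)..T, z t * u' t) - ∫ t in (0:ℝ)..T, g t * u' t := by
    have heq : ∀ t : ℝ, (θ * z t - g t) * u' t = θ * (z t * u' t) - g t * u' t :=
      fun t => by ring
    simp only [heq]
    rw [intervalIntegral.integral_sub (izu'.const_mul θ) igu',
      intervalIntegral.integral_const_mul]
  have hgu' : (∫ t in (0:ℝ)..T, g t * u' t) = I := by
    rw [hIdef]
    apply intervalIntegral.integral_congr
    intro t ht
    rw [huIcc] at ht
    show g t * u' t = u' t ^ 2
    rw [hgeq t ht, pow_two]
  -- Step 4: integration by parts for ∫ u z'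
  have hibp2 : (∫ t in (0:ℝ)..T, u t * (-(θ * w t)))
      = u T * z T - u 0 * z 0 - ∫ t in (0:ℝ)..T, u' t * z t := by
    apply intervalIntegral.integral_mul_deriv_eq_deriv_mul
    · intro x hx; rw [huIcc] at hx; exact hu x hx
    · intro x hx; exact hzd x
    · exact hint hu'cont
    · exact hint ((continuous_const.mul hwc).neg.continuousOn)
  have hexp2 : (∫ t in (0:ℝ)..T, u t * (-(θ * w t)))
      = -(θ * ∫ t in (0:ℝ)..T, u t * w t) := by
    have heq : ∀ t : ℝ, u t * (-(θ * w t)) = -(θ * (u t * w t)) := fun t => by ring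
    simp only [heq]
    rw [intervalIntegral.integral_neg, intervalIntegral.integral_const_mul]
  have hcomm2 : (∫ t in (0:ℝ)..T, z t * u' t) = ∫ t in (0:ℝ)..T, u' t * z t :=
    intervalIntegral.integral_congr fun t _ => mul_comm _ _
  -- Combine: ∫ f w = I
  have hkey : (∫ t in (0:ℝ)..T, f t * w t) = I := by
    have h1 : θ * (∫ t in (0:ℝ)..T, u t * w t) = ∫ t in (0:ℝ)..T, u' t * z t := by
      rw [hexp2, hzT, hu0] at hibp2
      linarith [hibp2]
    have h2 : μ * (∫ t in (0:ℝ)..T, u t * w t)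
        = θ * ∫ t in (0:ℝ)..T, u' t * z t := by
      rw [← h1, ← hθsq]; ring
    rw [hfw, hsplit, hcomm1, hibp1, hwT, hu'0, hexp1, hgu', h2, hcomm2]
    ring
  -- Step 5: apply the duality bound
  have hdb : I ≤ C * Real.sqrt (∫ t in (0:ℝ)..T, (θ * z t - g t) ^ 2) := by
    rw [← hkey]
    exact hdual w (fun s => θ * z s - g s) (fun t _ => hwd t)
      (((continuous_const.mul hzc).sub hgcont).continuousOn) hwT
  -- Step 6: bound on ∫ z²
  set Z := ∫ t in (0:ℝ)..T, z t ^ 2 with hZdef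
  have hZ0 : 0 ≤ Z := intervalIntegral.integral_nonneg hle fun t _ => sq_nonneg _
  have hIg : (∫ t in (0:ℝ)..T, g t ^ 2) = I := by
    rw [hIdef]
    apply intervalIntegral.integral_congr
    intro t ht
    rw [huIcc] at ht
    show g t ^ 2 = u' t ^ 2
    rw [hgeq t ht]
  have hZbound : Z ≤ T ^ 2 / 4 * I := by
    -- pointwise bound
    have hptw : ∀ s ∈ Set.Icc (0:ℝ) T,
        z s ^ 2 ≤ ((T - s) / 2 - Real.sin (2 * θ * (T - s)) / (4 * θ)) * I := by
      intro s hs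
      have hsT : s ≤ T := hs.2
      have hzs : z s = ∫ t in s..T, Real.sin (θ * (t - s)) * g t := by
        have i1 : IntervalIntegrable
            (fun t : ℝ => Real.cos (θ * s) * (Real.sin (θ * t) * g t)) volume s T := by
          apply Continuous.intervalIntegrable
          exact continuous_const.mul
            ((Real.continuous_sin.comp (continuous_const.mul continuous_id)).mul hgcont)
        have i2 : IntervalIntegrable
            (fun t : ℝ => Real.sin (θ * s) * (Real.cos (θ * t) * g t)) volume s T := by
          apply Continuous.intervalIntegrable
          exact continuous_const.mul
            ((Real.continuous_cos.comp (continuous_const.mul continuous_id)).mul hgcont)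
        simp only [hzdef, hAdef, hBdef]
        rw [← intervalIntegral.integral_const_mul, ← intervalIntegral.integral_const_mul,
          ← intervalIntegral.integral_sub i1 i2]
        apply intervalIntegral.integral_congr
        intro t ht
        show Real.cos (θ * s) * (Real.sin (θ * t) * g t)
            - Real.sin (θ * s) * (Real.cos (θ * t) * g t) = Real.sin (θ * (t - s)) * g t
        rw [show θ * (t - s) = θ * t - θ * s by ring, Real.sin_sub]
        ring
      have hcs := cs_sq_aux s T hsT (fun t => Real.sin (θ * (t - s))) g
        ((Real.continuous_sin.comp
          (continuous_const.mul (continuous_id.sub continuous_const))).continuousOn)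
        hgcont.continuousOn
      rw [← hzs] at hcs
      have hKval := K_eval θ hθ s T
      have hK0 : 0 ≤ ∫ t in s..T, Real.sin (θ * (t - s)) ^ 2 :=
        intervalIntegral.integral_nonneg hsT fun t _ => sq_nonneg _
      have hgsub : (∫ t in s..T, g t ^ 2) ≤ I := by
        rw [← hIg]
        have hadj : (∫ t in (0:ℝ)..s, g t ^ 2) + (∫ t in s..T, g t ^ 2)
            = ∫ t in (0:ℝ)..T, g t ^ 2 :=
          intervalIntegral.integral_add_adjacent_intervals
            ((hgcont.pow 2).intervalIntegrable 0 s) ((hgcont.pow 2).intervalIntegrable s T)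
        have h0s : 0 ≤ ∫ t in (0:ℝ)..s, g t ^ 2 :=
          intervalIntegral.integral_nonneg hs.1 fun t _ => sq_nonneg _
        linarith
      calc z s ^ 2 ≤ (∫ t in s..T, Real.sin (θ * (t - s)) ^ 2) * ∫ t in s..T, g t ^ 2 := hcs
      _ ≤ (∫ t in s..T, Real.sin (θ * (t - s)) ^ 2) * I := by
          apply mul_le_mul_of_nonneg_left hgsub hK0
      _ = ((T - s) / 2 - Real.sin (2 * θ * (T - s)) / (4 * θ)) * I := by rw [hKval]
    have hmono : Z ≤ ∫ s in (0:ℝ)..T,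
        ((T - s) / 2 - Real.sin (2 * θ * (T - s)) / (4 * θ)) * I := by
      rw [hZdef]
      apply intervalIntegral.integral_mono_on hle (hint ((hzc.pow 2).continuousOn)) _ hptw
      apply Continuous.intervalIntegrable
      exact (((continuous_const.sub continuous_id).div_const 2).sub
        ((Real.continuous_sin.comp
          (continuous_const.mul (continuous_const.sub continuous_id))).div_const (4 * θ))).mul
        continuous_const
    have hval : (∫ s in (0:ℝ)..T,
        ((T - s) / 2 - Real.sin (2 * θ * (T - s)) / (4 * θ)) * I)
        = (T ^ 2 / 4 - (1 - Real.cos (2 * θ * T)) / (8 * θ ^ 2)) * I := by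
      rw [intervalIntegral.integral_mul_const, intK_eval θ hθ T]
    have hcos1 : Real.cos (2 * θ * T) ≤ 1 := Real.cos_le_one _
    have hfinal : (T ^ 2 / 4 - (1 - Real.cos (2 * θ * T)) / (8 * θ ^ 2)) * I
        ≤ T ^ 2 / 4 * I := by
      apply mul_le_mul_of_nonneg_right _ hI0
      have h8 : 0 < 8 * θ ^ 2 := by positivity
      have : 0 ≤ (1 - Real.cos (2 * θ * T)) / (8 * θ ^ 2) :=
        div_nonneg (by linarith) h8.le
      linarith
    exact hmono.trans (hval.le.trans hfinal)
  -- Step 7: bound the dual norm term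
  have hsqZ : Real.sqrt Z ≤ T / 2 * Real.sqrt I := by
    calc Real.sqrt Z ≤ Real.sqrt (T ^ 2 / 4 * I) := Real.sqrt_le_sqrt hZbound
    _ = Real.sqrt (T ^ 2 / 4) * Real.sqrt I := Real.sqrt_mul (by positivity) _
    _ = T / 2 * Real.sqrt I := by
        rw [show T ^ 2 / 4 = (T / 2) ^ 2 by ring, Real.sqrt_sq (by positivity)]
  have hzg : (∫ t in (0:ℝ)..T, z t * (-(g t))) ≤ Real.sqrt Z * Real.sqrt I := by
    have h := cs_aux 0 T hle z (fun t => -g t) hzc.continuousOn hgcont.neg.continuousOn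
    have hng : (∫ t in (0:ℝ)..T, (-g t) ^ 2) = I := by rw [← hIg]; simp [neg_pow]
    rw [hng] at h
    rw [← hZdef] at h
    exact h
  have hwdexp : (∫ t in (0:ℝ)..T, (θ * z t - g t) ^ 2)
      ≤ (θ * Real.sqrt Z + Real.sqrt I) ^ 2 := by
    have heq : ∀ t : ℝ, (θ * z t - g t) ^ 2
        = θ ^ 2 * z t ^ 2 + 2 * θ * (z t * (-(g t))) + g t ^ 2 := fun t => by ring
    have izg : IntervalIntegrable (fun t => z t * (-(g t))) volume 0 T :=
      hint (hzc.continuousOn.mul hgcont.neg.continuousOn)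
    have hsum : (∫ t in (0:ℝ)..T, (θ * z t - g t) ^ 2)
        = θ ^ 2 * Z + 2 * θ * (∫ t in (0:ℝ)..T, z t * (-(g t))) + I := by
      simp only [heq]
      rw [intervalIntegral.integral_add (f := fun t => θ ^ 2 * z t ^ 2 + 2 * θ * (z t * (-(g t)))) (g := fun t => g t ^ 2)
          ((((hint ((hzc.pow 2).continuousOn)).const_mul _)).add (izg.const_mul _))
          (hint ((hgcont.pow 2).continuousOn)),
        intervalIntegral.integral_add (f := fun t => θ ^ 2 * z t ^ 2) (g := fun t => 2 * θ * (z t * (-(g t)))) ((hint ((hzc.pow 2).continuousOn)).const_mul _)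
          (izg.const_mul _),
        intervalIntegral.integral_const_mul, intervalIntegral.integral_const_mul,
        hIg, hZdef]
    rw [hsum]
    have hsqZ2 : Real.sqrt Z ^ 2 = Z := Real.sq_sqrt hZ0
    have hsqI2 : Real.sqrt I ^ 2 = I := Real.sq_sqrt hI0
    have h2 : 2 * θ * (∫ t in (0:ℝ)..T, z t * (-(g t)))
        ≤ 2 * θ * (Real.sqrt Z * Real.sqrt I) :=
      mul_le_mul_of_nonneg_left hzg (by positivity)
    have hexpand : (θ * Real.sqrt Z + Real.sqrt I) ^ 2
        = θ ^ 2 * Z + 2 * θ * (Real.sqrt Z * Real.sqrt I) + I := by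
      rw [add_sq, mul_pow, hsqZ2, hsqI2]; ring
    linarith
  have hnn : 0 ≤ θ * Real.sqrt Z + Real.sqrt I := by positivity
  have hsqrtwd : Real.sqrt (∫ t in (0:ℝ)..T, (θ * z t - g t) ^ 2)
      ≤ θ * Real.sqrt Z + Real.sqrt I := by
    calc Real.sqrt (∫ t in (0:ℝ)..T, (θ * z t - g t) ^ 2)
        ≤ Real.sqrt ((θ * Real.sqrt Z + Real.sqrt I) ^ 2) := Real.sqrt_le_sqrt hwdexp
    _ = θ * Real.sqrt Z + Real.sqrt I := Real.sqrt_sq hnn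
  -- Step 8: conclude
  set N := Real.sqrt I with hNdef
  have hN0 : 0 ≤ N := Real.sqrt_nonneg _
  have hNsq : N ^ 2 = I := Real.sq_sqrt hI0
  have hmain : N ^ 2 ≤ C * ((1 + θ * T / 2) * N) := by
    have hc1 : Real.sqrt (∫ t in (0:ℝ)..T, (θ * z t - g t) ^ 2)
        ≤ (1 + θ * T / 2) * N := by
      calc Real.sqrt (∫ t in (0:ℝ)..T, (θ * z t - g t) ^ 2)
          ≤ θ * Real.sqrt Z + N := hsqrtwd
      _ ≤ θ * (T / 2 * N) + N := by
          have := mul_le_mul_of_nonneg_left hsqZ hθ.le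
          linarith
      _ = (1 + θ * T / 2) * N := by ring
    calc N ^ 2 = I := hNsq
    _ ≤ C * Real.sqrt (∫ t in (0:ℝ)..T, (θ * z t - g t) ^ 2) := hdb
    _ ≤ C * ((1 + θ * T / 2) * N) := mul_le_mul_of_nonneg_left hc1 hC
  rcases eq_or_lt_of_le hN0 with hN0' | hNpos
  · rw [← hN0']
    have hθT : 0 ≤ θ * T := mul_nonneg hθ.le hle
    have : 0 ≤ (2 + θ * T) / 2 * C := mul_nonneg (by linarith) hC
    linarith
  · have h9 : C * ((1 + θ * T / 2) * N) = ((2 + θ * T) / 2 * C) * N := by ring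
    rw [h9, pow_two] at hmain
    exact le_of_mul_le_mul_right hmain hNpos
end

section
/- Let T > 0, μ > 0 and let b be a real number with b > μT²/2. Then for every function v : ℝ → ℝ that is C¹ on [0,T] with v(0) = 0, the following Gårding inequality holds: ∫₀ᵀ v'(t)² dt − μ ∫₀ᵀ v(t)² dt + μ·v(T)·∫₀ᵀ v(t) dt ≥ (1 − μT²/(2b)) · ∫₀ᵀ v'(t)² dt − ((2+b)/2)·μ · ∫₀ᵀ v(t)² dt. -/
open Real Set intervalIntegral

/-- Cauchy–Schwarz for interval integrals of continuous functions. -/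
lemma garding_cs (T : ℝ) (hT : 0 < T) (f : ℝ → ℝ)
    (hf : ContinuousOn f (Set.Icc (0:ℝ) T)) :
    (∫ t in (0:ℝ)..T, f t) ^ 2 ≤ T * ∫ t in (0:ℝ)..T, (f t) ^ 2 := by
  have huIcc : Set.uIcc (0:ℝ) T = Set.Icc 0 T := Set.uIcc_of_le hT.le
  have hfi : IntervalIntegrable f MeasureTheory.volume 0 T :=
    (huIcc ▸ hf).intervalIntegrable
  have hf2i : IntervalIntegrable (fun t => (f t) ^ 2) MeasureTheory.volume 0 T :=
    (huIcc ▸ (hf.pow 2)).intervalIntegrable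
  set I := ∫ t in (0:ℝ)..T, f t with hI
  set c := I / T with hc
  have h0 : (0:ℝ) ≤ ∫ t in (0:ℝ)..T, (f t - c) ^ 2 :=
    intervalIntegral.integral_nonneg hT.le (fun t _ => sq_nonneg _)
  have hexp : (∫ t in (0:ℝ)..T, (f t - c) ^ 2)
      = (∫ t in (0:ℝ)..T, (f t) ^ 2) - 2 * c * I + c ^ 2 * T := by
    have : ∀ t, (f t - c) ^ 2 = (f t) ^ 2 - (2 * c) * f t + c ^ 2 := by
      intro t; ring
    simp_rw [this]
    rw [intervalIntegral.integral_add ((hf2i.sub (hfi.const_mul _))) intervalIntegrable_const,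
      intervalIntegral.integral_sub hf2i (hfi.const_mul _),
      intervalIntegral.integral_const_mul, intervalIntegral.integral_const,
      smul_eq_mul]
    field_simp
    ring
  rw [hexp] at h0
  have hc' : c * T = I := by rw [hc]; exact div_mul_cancel₀ I hT.ne'
  nlinarith [sq_nonneg c, sq_nonneg I]

/-- The Gårding inequality
`a(v, H̄_T v) ≥ (1 − μT²/(2b))·|v|²_{H¹} − ((2+b)/2)·μ·‖v‖²_{L²}`
for the bilinear form of the ODE `u'' + μu = f`. -/
theorem garding_inequality (T μ b : ℝ) (hT : 0 < T) (hμ : 0 < μ)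
    (hb : b > μ * T ^ 2 / 2)
    (v v' : ℝ → ℝ)
    (hv : ∀ t ∈ Set.Icc (0:ℝ) T, HasDerivAt v (v' t) t)
    (hv' : ContinuousOn v' (Set.Icc (0:ℝ) T))
    (hv0 : v 0 = 0) :
    (∫ t in (0:ℝ)..T, (v' t) ^ 2) - μ * (∫ t in (0:ℝ)..T, (v t) ^ 2)
        + μ * v T * (∫ t in (0:ℝ)..T, v t) ≥
      (1 - μ * T ^ 2 / (2 * b)) * (∫ t in (0:ℝ)..T, (v' t) ^ 2)
        - ((2 + b) / 2) * μ * (∫ t in (0:ℝ)..T, (v t) ^ 2) := by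
  have huIcc : Set.uIcc (0:ℝ) T = Set.Icc 0 T := Set.uIcc_of_le hT.le
  have hb0 : 0 < b := lt_of_le_of_lt (by positivity) hb
  have hvcont : ContinuousOn v (Set.Icc (0:ℝ) T) := fun t ht =>
    (hv t ht).continuousAt.continuousWithinAt
  have hv'i : IntervalIntegrable v' MeasureTheory.volume 0 T :=
    (huIcc ▸ hv').intervalIntegrable
  -- FTC: v T = ∫ v'
  have hftc : ∫ t in (0:ℝ)..T, v' t = v T - v 0 :=
    intervalIntegral.integral_eq_sub_of_hasDerivAt (fun t ht => hv t (huIcc ▸ ht)) hv'i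
  have hvT : v T = ∫ t in (0:ℝ)..T, v' t := by rw [hftc, hv0]; ring
  set A := ∫ t in (0:ℝ)..T, (v' t) ^ 2 with hA
  set B := ∫ t in (0:ℝ)..T, (v t) ^ 2 with hB
  set I := ∫ t in (0:ℝ)..T, v t with hI
  have hS : (v T) ^ 2 ≤ T * A := by rw [hvT]; exact garding_cs T hT v' hv'
  have hI2 : I ^ 2 ≤ T * B := garding_cs T hT v hvcont
  set S := v T
  -- goal after algebra: μ*S*I + μ*T²/(2b)*A + (b/2)*μ*B ≥ 0
  rw [ge_iff_le, sub_le_iff_le_add]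
  have key : 0 ≤ T ^ 2 * A + b ^ 2 * B + 2 * b * (S * I) := by
    nlinarith [sq_nonneg (T * S + b * I), mul_le_mul_of_nonneg_left hS hT.le,
      mul_le_mul_of_nonneg_left hI2 (sq_nonneg b), sq_nonneg (b*S - b*I), hT, hb0]
  have h1 : 0 ≤ T ^ 2 / (2 * b) * A + b / 2 * B + S * I := by
    have := div_nonneg key (by positivity : (0:ℝ) ≤ 2 * b)
    have heq : (T ^ 2 * A + b ^ 2 * B + 2 * b * (S * I)) / (2 * b)
        = T ^ 2 / (2 * b) * A + b / 2 * B + S * I := by field_simp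
    linarith [heq ▸ this]
  have h2 : 0 ≤ μ * T ^ 2 / (2 * b) * A + b / 2 * μ * B + μ * (S * I) := by
    have h3 := mul_nonneg hμ.le h1
    have : μ * (T ^ 2 / (2 * b) * A + b / 2 * B + S * I)
        = μ * T ^ 2 / (2 * b) * A + b / 2 * μ * B + μ * (S * I) := by ring
    linarith [this ▸ h3]
  nlinarith [h2]
end

section
/- Let T > 0 and μ > 0. Let u, w : ℝ → ℝ be C¹ on [0,T] with u(0) = 0 and w(0) = 0, and suppose that ∫₀ᵀ w'(t)v'(t) dt = −μ ∫₀ᵀ u(t)·(v(T) − v(t)) dt for every function v that is C¹ on [0,T] with v(0) = 0. Then ∫₀ᵀ u'(t)·(u'(t) − w'(t)) dt + μ ∫₀ᵀ u(t)·[(u(T) − w(T)) − (u(t) − w(t))] dt = ∫₀ᵀ (u'(t) − w'(t))² dt. -/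
open Real Set intervalIntegral

/-- The identity `a(u, H̄_T(u − w)) = |u − w|²_{H¹(0,T)}` for the solution `w` of
the auxiliary variational problem `⟨w', v'⟩ = −μ⟨u, H̄_T v⟩`. -/
theorem auxiliary_identity (T μ : ℝ) (hT : 0 < T) (hμ : 0 < μ)
    (u u' w w' : ℝ → ℝ)
    (hu : ∀ t ∈ Set.Icc (0:ℝ) T, HasDerivAt u (u' t) t)
    (hu' : ContinuousOn u' (Set.Icc (0:ℝ) T))
    (hu0 : u 0 = 0)
    (hw : ∀ t ∈ Set.Icc (0:ℝ) T, HasDerivAt w (w' t) t)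
    (hw' : ContinuousOn w' (Set.Icc (0:ℝ) T))
    (hw0 : w 0 = 0)
    (hvar : ∀ v v' : ℝ → ℝ,
      (∀ t ∈ Set.Icc (0:ℝ) T, HasDerivAt v (v' t) t) →
      ContinuousOn v' (Set.Icc (0:ℝ) T) →
      v 0 = 0 →
      ∫ t in (0:ℝ)..T, w' t * v' t = -μ * ∫ t in (0:ℝ)..T, u t * (v T - v t)) :
    (∫ t in (0:ℝ)..T, u' t * (u' t - w' t))
        + μ * ∫ t in (0:ℝ)..T, u t * ((u T - w T) - (u t - w t)) =
      ∫ t in (0:ℝ)..T, (u' t - w' t) ^ 2 := by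
  have key := hvar (fun t => u t - w t) (fun t => u' t - w' t)
    (fun t ht => (hu t ht).sub (hw t ht)) (hu'.sub hw')
    (by simp [hu0, hw0])
  have huIcc : Set.uIcc (0:ℝ) T = Set.Icc 0 T := Set.uIcc_of_le hT.le
  have hiu : IntervalIntegrable (fun t => u' t * (u' t - w' t)) MeasureTheory.volume 0 T :=
    (hu'.mul (hu'.sub hw')).intervalIntegrable_of_Icc hT.le
  have hiw : IntervalIntegrable (fun t => w' t * (u' t - w' t)) MeasureTheory.volume 0 T :=
    (hw'.mul (hu'.sub hw')).intervalIntegrable_of_Icc hT.le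
  have hμint : μ * ∫ t in (0:ℝ)..T, u t * ((u T - w T) - (u t - w t))
      = - ∫ t in (0:ℝ)..T, w' t * (u' t - w' t) := by
    rw [key]; ring
  rw [hμint, ← sub_eq_add_neg, ← intervalIntegral.integral_sub hiu hiw]
  congr 1; ext t; ring
end

section
/- Let H and V be real Hilbert spaces and ι : H → V an injective compact continuous linear map (the compact inclusion H ⊂ V). Let a : H × H → ℝ be a bilinear form with |a(v,w)| ≤ C_a‖v‖_H‖w‖_H for all v, w ∈ H (C_a > 0), satisfying the Gårding inequality a(v,v) ≥ α‖v‖_H² − C_V‖ι v‖_V² for all v ∈ H, with α, C_V > 0. Assume the problem is well-posed with stability constant C_stab > 0: for every bounded linear functional F on H there is a unique u ∈ H with a(u,v) = F(v) for all v ∈ H, and it satisfies ‖u‖_H ≤ C_stab‖F‖_{H'}. Assume moreover that for every g ∈ V there exists z_g ∈ H solving the adjoint problem a(v, z_g) = ⟨g, ι v⟩_V for all v ∈ H. Let V_h be a finite-dimensional subspace of H such that for every g ∈ V with g ≠ 0, inf_{v_h ∈ V_h} ‖z_g − v_h‖_H ≤ η·‖g‖_V with η ≤ (1/C_a)·√(α/(2C_V)).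 Then for every bounded linear functional F on H: (i) there exists a unique u_h ∈ V_h with a(u_h, v_h) = F(v_h) for all v_h ∈ V_h; (ii) ‖u_h‖_H ≤ C_stab·(1 + 2C_a/α)·‖F‖_{H'}; and (iii) if u ∈ H is the solution of a(u,v) = F(v) for all v ∈ H, then ‖u − u_h‖_H ≤ (2C_a/α)·inf_{v_h ∈ V_h}‖u − v_h‖_H. -/
open Filter

set_option maxHeartbeats 1600000

/-- The Galerkin method applied to Gårding-type problems: under the threshold
condition `η ≤ (1/C_a)√(α/(2C_V))` on the adjoint approximation quality of the
discrete space `V_h`, the Galerkin discretization is well-posed, stable with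
constant `C_stab(1 + 2C_a/α)`, and quasi-optimal with constant `2C_a/α`. -/
theorem galerkin_garding
    {H V : Type*}
    [NormedAddCommGroup H] [InnerProductSpace ℝ H] [CompleteSpace H]
    [NormedAddCommGroup V] [InnerProductSpace ℝ V] [CompleteSpace V]
    (ι : H →L[ℝ] V) (hι_inj : Function.Injective ι) (hι_cpt : IsCompactOperator ι)
    (a : H →ₗ[ℝ] H →ₗ[ℝ] ℝ)
    (Ca : ℝ) (hCa : 0 < Ca)
    (hbound : ∀ v w : H, |a v w| ≤ Ca * ‖v‖ * ‖w‖)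
    (α CV : ℝ) (hα : 0 < α) (hCV : 0 < CV)
    (hgarding : ∀ v : H, a v v ≥ α * ‖v‖ ^ 2 - CV * ‖ι v‖ ^ 2)
    (Cstab : ℝ) (hCstab : 0 < Cstab)
    (hwellposed : ∀ F : H →L[ℝ] ℝ, ∃! u : H, ∀ v : H, a u v = F v)
    (hstab : ∀ F : H →L[ℝ] ℝ, ∀ u : H, (∀ v : H, a u v = F v) → ‖u‖ ≤ Cstab * ‖F‖)
    (Vh : Subspace ℝ H) [FiniteDimensional ℝ Vh]
    (η : ℝ) (hη : η ≤ (1 / Ca) * Real.sqrt (α / (2 * CV)))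
    (hadjoint : ∀ g : V, ∃ z : H, (∀ v : H, a v z = (inner ℝ g (ι v) : ℝ)) ∧
      (g ≠ 0 → (⨅ vh : Vh, ‖z - (vh : H)‖) ≤ η * ‖g‖)) :
    ∀ F : H →L[ℝ] ℝ,
      (∃! uh : H, uh ∈ Vh ∧ ∀ vh ∈ Vh, a uh vh = F vh) ∧
      (∀ uh ∈ Vh, (∀ vh ∈ Vh, a uh vh = F vh) →
        ‖uh‖ ≤ Cstab * (1 + 2 * Ca / α) * ‖F‖ ∧
        ∀ u : H, (∀ v : H, a u v = F v) →
          ∀ vh ∈ Vh, ‖u - uh‖ ≤ (2 * Ca / α) * ‖u - vh‖) := by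
  -- Key lemma: if e is a-orthogonal to Vh, then CV‖ιe‖² ≤ (α/2)‖e‖².
  have key : ∀ e : H, (∀ wh ∈ Vh, a e wh = 0) → CV * ‖ι e‖ ^ 2 ≤ (α / 2) * ‖e‖ ^ 2 := by
    intro e horth
    by_cases h0 : ι e = 0
    · rw [h0]; simp; positivity
    · have he : e ≠ 0 := by
        intro h; apply h0; rw [h]; exact map_zero ι
      have hne : (0:ℝ) < ‖e‖ := norm_pos_iff.mpr he
      have hιe : (0:ℝ) < ‖ι e‖ := norm_pos_iff.mpr h0
      obtain ⟨z, hz, hzapprox⟩ := hadjoint (ι e)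
      have hg := hzapprox h0
      have h1 : a e z = ‖ι e‖ ^ 2 := by
        rw [hz e, real_inner_self_eq_norm_sq]
      -- a e z ≤ Ca‖e‖‖z - vh‖ for every vh ∈ Vh
      have h2 : ∀ vh : Vh, a e z ≤ Ca * ‖e‖ * ‖z - (vh : H)‖ := by
        intro vh
        have horth' : a e (vh : H) = 0 := horth vh vh.2
        have : a e z = a e (z - (vh : H)) := by
          rw [map_sub, horth', sub_zero]
        rw [this]
        exact le_trans (le_abs_self _) (hbound e _)
      -- pass to the infimum
      have hCe : (0:ℝ) < Ca * ‖e‖ := by positivity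
      have h3 : a e z ≤ Ca * ‖e‖ * (⨅ vh : Vh, ‖z - (vh : H)‖) := by
        rw [← div_le_iff₀' hCe]
        apply le_ciInf
        intro vh
        rw [div_le_iff₀' hCe]
        exact h2 vh
      have h4 : ‖ι e‖ ^ 2 ≤ Ca * ‖e‖ * (η * ‖ι e‖) := by
        rw [← h1]
        exact h3.trans (mul_le_mul_of_nonneg_left hg (le_of_lt hCe))
      have h5 : ‖ι e‖ ≤ Ca * η * ‖e‖ := by
        have : ‖ι e‖ * ‖ι e‖ ≤ (Ca * η * ‖e‖) * ‖ι e‖ := by nlinarith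
        exact le_of_mul_le_mul_right this hιe
      have hηpos : 0 ≤ η := by nlinarith
      have hsq : (Real.sqrt (α / (2 * CV))) ^ 2 = α / (2 * CV) := by
        rw [Real.sq_sqrt]; positivity
      have hη2 : Ca ^ 2 * η ^ 2 ≤ α / (2 * CV) := by
        have h6 : Ca * η ≤ Real.sqrt (α / (2 * CV)) := by
          rw [one_div] at hη
          calc Ca * η ≤ Ca * (Ca⁻¹ * Real.sqrt (α / (2 * CV))) :=
                mul_le_mul_of_nonneg_left hη (le_of_lt hCa)
            _ = Real.sqrt (α / (2 * CV)) := by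
                rw [← mul_assoc, mul_inv_cancel₀ (ne_of_gt hCa), one_mul]
        nlinarith [Real.sqrt_nonneg (α / (2 * CV)), mul_nonneg (le_of_lt hCa) hηpos,
          sq_nonneg (Real.sqrt (α / (2 * CV)) - Ca * η)]
      have hη2' : Ca ^ 2 * η ^ 2 * (2 * CV) ≤ α := by
        rw [← le_div_iff₀ (by positivity)]
        exact hη2
      have h7 : ‖ι e‖ ^ 2 ≤ Ca ^ 2 * η ^ 2 * ‖e‖ ^ 2 := by nlinarith
      nlinarith [mul_le_mul_of_nonneg_right hη2' (sq_nonneg ‖e‖),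
        mul_le_mul_of_nonneg_left h7 (le_of_lt hCV)]
  -- quasi-optimality for any pair of solutions
  have quasi : ∀ u uh : H, uh ∈ Vh → (∀ wh ∈ Vh, a u wh = a uh wh) →
      ∀ vh ∈ Vh, ‖u - uh‖ ≤ (2 * Ca / α) * ‖u - vh‖ := by
    intro u uh huh hgal vh hvh
    set e := u - uh with he
    have horth : ∀ wh ∈ Vh, a e wh = 0 := by
      intro wh hwh
      rw [he, map_sub, LinearMap.sub_apply, hgal wh hwh, sub_self]
    have hkey := key e horth
    have hgard := hgarding e
    have haee : a e e = a e (u - vh) := by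
      have h0 : a e (vh - uh) = 0 := horth _ (Vh.sub_mem hvh huh)
      have h1 : a e e = a e (u - vh) + a e (vh - uh) := by
        rw [← map_add]; congr 1; rw [he]; abel
      rw [h1, h0, add_zero]
    have hb : a e (u - vh) ≤ Ca * ‖e‖ * ‖u - vh‖ :=
      le_trans (le_abs_self _) (hbound e _)
    have hmain : (α / 2) * ‖e‖ ^ 2 ≤ Ca * ‖e‖ * ‖u - vh‖ := by nlinarith
    rcases eq_or_lt_of_le (norm_nonneg e) with hez | hez
    · rw [← hez]; positivity
    · have h' : ((α / 2) * ‖e‖) * ‖e‖ ≤ (Ca * ‖u - vh‖) * ‖e‖ := by nlinarith [hmain]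
      have h'' := le_of_mul_le_mul_right h' hez
      rw [div_mul_eq_mul_div, le_div_iff₀ hα]
      nlinarith [h'']
  intro F
  -- the discrete bilinear form as a map to the dual
  let T : Vh →ₗ[ℝ] Module.Dual ℝ Vh := (a.domRestrict Vh).compl₂ Vh.subtype
  have hT : ∀ (x : Vh) (y : Vh), T x y = a (x : H) (y : H) := by
    intro x y
    simp only [T, LinearMap.compl₂_apply, LinearMap.domRestrict_apply, Submodule.coe_subtype]
  have hTinj : Function.Injective T := by
    rw [← LinearMap.ker_eq_bot, LinearMap.ker_eq_bot']
    intro x hx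
    have horth : ∀ wh ∈ Vh, a (x : H) wh = a ((0:H)) wh := by
      intro wh hwh
      have := congrArg (fun f => f ⟨wh, hwh⟩) hx
      simp only [hT] at this
      simpa [map_zero] using this
    have := quasi (x : H) 0 Vh.zero_mem horth (x : H) x.2
    simp only [sub_self, norm_zero, sub_zero] at this
    have hx0 : ‖(x:H)‖ ≤ 0 := by simpa using this
    have : (x : H) = 0 := norm_le_zero_iff.mp hx0
    exact Subtype.ext this
  have hTsurj : Function.Surjective T :=
    (LinearMap.injective_iff_surjective_of_finrank_eq_finrank
      (Subspace.dual_finrank_eq (V := Vh)).symm).mp hTinj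
  obtain ⟨x, hx⟩ := hTsurj ((F : H →ₗ[ℝ] ℝ).domRestrict Vh)
  have hxsol : ∀ vh ∈ Vh, a (x : H) vh = F vh := by
    intro vh hvh
    have := congrArg (fun f => f ⟨vh, hvh⟩) hx
    simpa [hT] using this
  constructor
  · refine ⟨(x : H), ⟨x.2, hxsol⟩, ?_⟩
    rintro y ⟨hy, hysol⟩
    have hgal : ∀ wh ∈ Vh, a y wh = a (x : H) wh := by
      intro wh hwh; rw [hysol wh hwh, hxsol wh hwh]
    have := quasi y (x : H) x.2 hgal y hy
    simp only [sub_self, norm_zero] at this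
    have : ‖y - (x:H)‖ ≤ 0 := by simpa using this
    have := norm_le_zero_iff.mp this
    rw [sub_eq_zero] at this
    exact this
  · intro uh huh hsol
    obtain ⟨u, hu, -⟩ := hwellposed F
    have hgal : ∀ wh ∈ Vh, a u wh = a uh wh := by
      intro wh hwh; rw [hu wh, hsol wh hwh]
    constructor
    · have hq := quasi u uh huh hgal 0 Vh.zero_mem
      simp only [sub_zero] at hq
      have hustab : ‖u‖ ≤ Cstab * ‖F‖ := hstab F u hu
      have h1 : ‖uh‖ ≤ ‖u‖ + ‖u - uh‖ := by
        have := norm_sub_norm_le u (u - uh)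
        have h2 : u - (u - uh) = uh := by abel
        calc ‖uh‖ = ‖u - (u - uh)‖ := by rw [h2]
          _ ≤ ‖u‖ + ‖u - uh‖ := norm_sub_le _ _
      have hc : (0:ℝ) ≤ 2 * Ca / α := by positivity
      calc ‖uh‖ ≤ ‖u‖ + (2 * Ca / α) * ‖u‖ := by linarith
        _ = (1 + 2 * Ca / α) * ‖u‖ := by ring
        _ ≤ (1 + 2 * Ca / α) * (Cstab * ‖F‖) := by
            apply mul_le_mul_of_nonneg_left hustab; linarith
        _ = Cstab * (1 + 2 * Ca / α) * ‖F‖ := by ring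
    · intro u' hu' vh hvh
      have hgal' : ∀ wh ∈ Vh, a u' wh = a uh wh := by
        intro wh hwh; rw [hu' wh, hsol wh hwh]
      exact quasi u' uh huh hgal' vh hvh
end
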